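/- For every f : {0,1}^d → {±1}, p ∈ (0,1), and coordinate i ∈ [d], the noise stabilizing score Score_f(i, p) = NS_p(f) − E_{b ∈ {0,1}}[NS_p(f_{i=b})] is well-defined and the averaged restricted noise sensitivity satisfies E_b[NS_p(f_{i=b})] ≤ NS_p(f) / (1 − p) where f_{i=b} is f with coordinate i fixed to b (viewed as a function of the remaining coordinates). -/
import Mathlib


open Finset

open Classical in
noncomputable def noiseSens {d : ℕ} (p : ℝ) (f : (Fin d → Bool) → Bool) : ℝ :=
  ∑ x : Fin d → Bool, ∑ s : Fin d → Bool, ∑ u : Fin d → Bool,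
    (1 / 2 ^ d : ℝ) * (∏ i : Fin d, if s i then p else 1 - p) * (1 / 2 ^ d : ℝ) *
      (if f x ≠ f (fun i => if s i then u i else x i) then 1 else 0)

/-- The restriction `f_{i=b}`, viewed as a function on the full cube that ignores
coordinate `i` (its noise sensitivity agrees with that of the `(d−1)`-dimensional
restriction, since re-randomizing an irrelevant coordinate has no effect). -/
def restrictCoord {d : ℕ} (f : (Fin d → Bool) → Bool) (i : Fin d) (b : Bool) :
    (Fin d → Bool) → Bool :=
  fun y => f (Function.update y i b)

/-- The noise stabilizing score of feature `i`:
`Score_f(i, p) = NS_p(f) − E_b[NS_p(f_{i=b})]`. -/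
noncomputable def score {d : ℕ} (f : (Fin d → Bool) → Bool) (i : Fin d) (p : ℝ) : ℝ :=
  noiseSens p f -
    (noiseSens p (restrictCoord f i false) + noiseSens p (restrictCoord f i true)) / 2

variable {d : ℕ}


noncomputable def Wt (p : ℝ) {d : ℕ} (s : Fin d → Bool) : ℝ :=
  ∏ j : Fin d, if s j then p else 1 - p

open Classical in
noncomputable def ind {d : ℕ} (f : (Fin d → Bool) → Bool) (x s u : Fin d → Bool) : ℝ :=
  if f x ≠ f (fun j => if s j then u j else x j) then 1 else 0

/-- flipC coordinate i -/
def flipC (i : Fin d) (x : Fin d → Bool) : Fin d → Bool := Function.update x i (!(x i))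

lemma flip_invol (i : Fin d) : Function.Involutive (flipC (d := d) i) := by
  intro x
  funext j
  by_cases h : j = i
  · subst h; simp [flipC]
  · simp [flipC, Function.update_of_ne h]

lemma flip_apply_self (i : Fin d) (x : Fin d → Bool) : flipC i x i = !(x i) := by
  simp [flipC]

lemma flip_apply_ne (i : Fin d) (x : Fin d → Bool) {j : Fin d} (h : j ≠ i) :
    flipC i x j = x j := by simp [flipC, Function.update_of_ne h]

lemma Wt_erase (p : ℝ) (i : Fin d) (s : Fin d → Bool) :
    Wt p s = (if s i then p else 1 - p) * ∏ j ∈ univ.erase i, (if s j then p else 1 - p) :=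
  (Finset.mul_prod_erase univ _ (mem_univ i)).symm

lemma Wt_flip (p : ℝ) (i : Fin d) (s : Fin d → Bool) (hs : s i = false) :
    Wt p (flipC i s) = p * ∏ j ∈ univ.erase i, (if s j then p else 1 - p) := by
  rw [Wt_erase p i, flip_apply_self, hs]
  simp only [Bool.not_false, if_true]
  congr 1
  refine Finset.prod_congr rfl fun j hj => ?_
  rw [flip_apply_ne i s (Finset.ne_of_mem_erase hj)]

lemma Wt_key (p : ℝ) (i : Fin d) (s : Fin d → Bool) (hs : s i = false) :
    (1 - p) * (Wt p s + Wt p (flipC i s)) = Wt p s := by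
  rw [Wt_flip p i s hs, Wt_erase p i s, hs]
  simp only [Bool.false_eq_true, if_false]
  ring

lemma sum_split (i : Fin d) (h : (Fin d → Bool) → ℝ) :
    ∑ x : Fin d → Bool, h x
      = (∑ x : Fin d → Bool, if x i = false then h x else 0)
        + (∑ x : Fin d → Bool, if x i = true then h x else 0) := by
  rw [← Finset.sum_add_distrib]
  refine Finset.sum_congr rfl fun x _ => ?_
  cases hx : x i <;> simp [hx]

lemma sum_reindex_flip (i : Fin d) (F : (Fin d → Bool) → ℝ) :
    ∑ x : Fin d → Bool, F x = ∑ x : Fin d → Bool, F (flipC i x) :=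
  (Fintype.sum_equiv (flip_invol i).toPerm _ _ fun x => rfl).symm

/-- conditioning the x-sum on `x i = b`, when `h` ignores coordinate `i`. -/
lemma sum_fix_x (i : Fin d) (b : Bool) (h : (Fin d → Bool) → ℝ)
    (hinv : ∀ x, h (flipC i x) = h x) :
    ∑ x : Fin d → Bool, h x = 2 * ∑ x : Fin d → Bool, (if x i = b then h x else 0) := by
  have key : (∑ x : Fin d → Bool, if x i = b then h x else 0)
      = ∑ x : Fin d → Bool, if x i = !b then h x else 0 := by
    rw [sum_reindex_flip i (fun x => if x i = b then h x else 0)]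
    refine Finset.sum_congr rfl fun x _ => ?_
    rw [flip_apply_self, hinv]
    cases hx : x i <;> cases b <;> simp
  rw [sum_split i h]
  cases b
  · rw [key]; simp only [Bool.not_false]; ring
  · rw [key]; simp only [Bool.not_true]; ring

/-- conditioning the s-sum on `s i = false`, when `h` ignores coordinate `i`. -/
lemma sum_fix_s (p : ℝ) (i : Fin d) (h : (Fin d → Bool) → ℝ)
    (hinv : ∀ s, h (flipC i s) = h s) :
    (1 - p) * ∑ s : Fin d → Bool, Wt p s * h s
      = ∑ s : Fin d → Bool, (if s i = false then Wt p s * h s else 0) := by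
  have key : (∑ s : Fin d → Bool, if s i = true then Wt p s * h s else 0)
      = ∑ s : Fin d → Bool, if s i = false then Wt p (flipC i s) * h s else 0 := by
    rw [sum_reindex_flip i (fun s => if s i = true then Wt p s * h s else 0)]
    refine Finset.sum_congr rfl fun s _ => ?_
    rw [flip_apply_self, hinv]
    cases hs : s i <;> simp
  rw [sum_split i (fun s => Wt p s * h s), key, ← Finset.sum_add_distrib, Finset.mul_sum]
  refine Finset.sum_congr rfl fun s _ => ?_
  cases hs : s i
  · simp [hs]
    linear_combination (h s) * Wt_key p i s hs
  · simp

lemma Wt_nonneg {p : ℝ} (hp0 : 0 ≤ p) (hp1 : p ≤ 1) (s : Fin d → Bool) : 0 ≤ Wt p s :=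
  Finset.prod_nonneg fun j _ => by split <;> linarith

lemma ind_nonneg (f : (Fin d → Bool) → Bool) (x s u : Fin d → Bool) : 0 ≤ ind f x s u := by
  unfold ind; split <;> norm_num

lemma restrict_congr (f : (Fin d → Bool) → Bool) (i : Fin d) (b : Bool)
    {y y' : Fin d → Bool} (h : ∀ j, j ≠ i → y j = y' j) :
    restrictCoord f i b y = restrictCoord f i b y' := by
  unfold restrictCoord
  congr 1
  funext j
  by_cases hj : j = i
  · subst hj; simp
  · simp [Function.update_of_ne hj, h j hj]

lemma ind_restrict_flip_x (f : (Fin d → Bool) → Bool) (i : Fin d) (b : Bool)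
    (x s u : Fin d → Bool) :
    ind (restrictCoord f i b) (flipC i x) s u = ind (restrictCoord f i b) x s u := by
  unfold ind
  have e1 : restrictCoord f i b (flipC i x) = restrictCoord f i b x :=
    restrict_congr f i b fun j hj => flip_apply_ne i x hj
  have e2 : restrictCoord f i b (fun j => if s j then u j else flipC i x j)
      = restrictCoord f i b (fun j => if s j then u j else x j) :=
    restrict_congr f i b fun j hj => by rw [flip_apply_ne i x hj]
  rw [e1, e2]

lemma ind_restrict_flip_s (f : (Fin d → Bool) → Bool) (i : Fin d) (b : Bool)
    (x s u : Fin d → Bool) :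
    ind (restrictCoord f i b) x (flipC i s) u = ind (restrictCoord f i b) x s u := by
  unfold ind
  have e2 : restrictCoord f i b (fun j => if flipC i s j then u j else x j)
      = restrictCoord f i b (fun j => if s j then u j else x j) :=
    restrict_congr f i b fun j hj => by rw [flip_apply_ne i s hj]
  rw [e2]

lemma ind_restrict_eq (f : (Fin d → Bool) → Bool) (i : Fin d) (b : Bool)
    {x s : Fin d → Bool} (u : Fin d → Bool) (hx : x i = b) (hs : s i = false) :
    ind (restrictCoord f i b) x s u = ind f x s u := by
  unfold ind restrictCoord
  have e1 : Function.update x i b = x := by rw [← hx]; exact Function.update_eq_self i x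
  have e2 : Function.update (fun j => if s j then u j else x j) i b
      = fun j => if s j then u j else x j := by
    have hv : (if s i then u i else x i) = b := by rw [hs]; simpa using hx
    rw [← hv]
    exact Function.update_eq_self i _
  rw [e1, e2]

lemma noiseSens_eq (p : ℝ) (f : (Fin d → Bool) → Bool) :
    noiseSens p f = ∑ x : Fin d → Bool, ∑ s : Fin d → Bool,
      Wt p s * ∑ u : Fin d → Bool, (1 / 2 ^ d : ℝ) * (1 / 2 ^ d : ℝ) * ind f x s u := by
  unfold noiseSens
  refine Finset.sum_congr rfl fun x _ => Finset.sum_congr rfl fun s _ => ?_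
  rw [Finset.mul_sum]
  refine Finset.sum_congr rfl fun u _ => ?_
  unfold Wt ind
  ring

lemma ite_sum {α : Type*} {P : Prop} [Decidable P] (t : Finset α) (F : α → ℝ) :
    (if P then ∑ a ∈ t, F a else 0) = ∑ a ∈ t, if P then F a else 0 := by
  split
  · rfl
  · simp

lemma key_eq (p : ℝ) (f : (Fin d → Bool) → Bool) (i : Fin d) (b : Bool) :
    (1 - p) * noiseSens p (restrictCoord f i b)
      = 2 * ∑ x : Fin d → Bool, ∑ s : Fin d → Bool, ∑ u : Fin d → Bool,
          (if x i = b ∧ s i = false then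
            (1 / 2 ^ d : ℝ) * Wt p s * (1 / 2 ^ d : ℝ) * ind f x s u else 0) := by
  classical
  set g := restrictCoord f i b with hg
  set B : (Fin d → Bool) → (Fin d → Bool) → ℝ :=
    fun x s => ∑ u : Fin d → Bool, (1 / 2 ^ d : ℝ) * (1 / 2 ^ d : ℝ) * ind g x s u with hB
  set A : (Fin d → Bool) → ℝ := fun x => ∑ s : Fin d → Bool, Wt p s * B x s with hA
  have hNs : noiseSens p g = ∑ x : Fin d → Bool, A x := noiseSens_eq p g
  have hAinv : ∀ x, A (flipC i x) = A x := by
    intro x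
    refine Finset.sum_congr rfl fun s _ => ?_
    congr 1
    refine Finset.sum_congr rfl fun u _ => ?_
    rw [ind_restrict_flip_x]
  have hBinv : ∀ x s, B x (flipC i s) = B x s := by
    intro x s
    refine Finset.sum_congr rfl fun u _ => ?_
    rw [ind_restrict_flip_s]
  have step1 : noiseSens p g = 2 * ∑ x : Fin d → Bool, (if x i = b then A x else 0) := by
    rw [hNs]; exact sum_fix_x i b A hAinv
  have step2 : ∀ x, (1 - p) * A x
      = ∑ s : Fin d → Bool, (if s i = false then Wt p s * B x s else 0) := by
    intro x
    exact sum_fix_s p i (B x) (hBinv x)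
  calc (1 - p) * noiseSens p g
      = 2 * ∑ x : Fin d → Bool, (if x i = b then (1 - p) * A x else 0) := by
        rw [step1, Finset.mul_sum, Finset.mul_sum, Finset.mul_sum]
        refine Finset.sum_congr rfl fun x _ => ?_
        split_ifs <;> ring
    _ = 2 * ∑ x : Fin d → Bool, ∑ s : Fin d → Bool, ∑ u : Fin d → Bool,
          (if x i = b ∧ s i = false then
            (1 / 2 ^ d : ℝ) * Wt p s * (1 / 2 ^ d : ℝ) * ind f x s u else 0) := by
        refine congrArg _ (Finset.sum_congr rfl fun x _ => ?_)
        rw [step2 x, ite_sum]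
        refine Finset.sum_congr rfl fun s _ => ?_
        have hBs : Wt p s * B x s = ∑ u : Fin d → Bool,
            Wt p s * ((1 / 2 ^ d : ℝ) * (1 / 2 ^ d : ℝ) * ind g x s u) := by
          rw [hB]; exact Finset.mul_sum _ _ _
        rw [hBs, ite_sum, ite_sum]
        refine Finset.sum_congr rfl fun u _ => ?_
        by_cases hx : x i = b <;> by_cases hs : s i = false
        · rw [if_pos hx, if_pos hs, if_pos ⟨hx, hs⟩, hg, ind_restrict_eq f i b u hx hs]
          ring
        · rw [if_pos hx, if_neg hs, if_neg (by tauto)]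
        · rw [if_neg hx, if_neg (by tauto)]
        · rw [if_neg hx, if_neg (by tauto)]


/-- the averaged restricted noise sensitivity satisfies
`E_b[NS_p(f_{i=b})] ≤ NS_p(f) / (1 − p)`. -/
theorem avg_restricted_noiseSens_le {d : ℕ} (f : (Fin d → Bool) → Bool) (i : Fin d)
    (p : ℝ) (hp0 : 0 < p) (hp1 : p < 1) :
    (noiseSens p (restrictCoord f i false) + noiseSens p (restrictCoord f i true)) / 2
      ≤ noiseSens p f / (1 - p) := by
  classical
  rw [div_le_div_iff₀ (by norm_num : (0:ℝ) < 2) (by linarith : (0:ℝ) < 1 - p)]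
  have k0 := key_eq p f i false
  have k1 := key_eq p f i true
  have hsum : ∑ x : Fin d → Bool, ∑ s : Fin d → Bool, ∑ u : Fin d → Bool,
        ((if x i = false ∧ s i = false then
            (1 / 2 ^ d : ℝ) * Wt p s * (1 / 2 ^ d : ℝ) * ind f x s u else 0)
          + (if x i = true ∧ s i = false then
            (1 / 2 ^ d : ℝ) * Wt p s * (1 / 2 ^ d : ℝ) * ind f x s u else 0))
      ≤ noiseSens p f := by
    rw [noiseSens_eq p f]
    refine Finset.sum_le_sum fun x _ => ?_
    have h2 : ∀ s : Fin d → Bool, Wt p s * ∑ u : Fin d → Bool,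
        (1 / 2 ^ d : ℝ) * (1 / 2 ^ d : ℝ) * ind f x s u
        = ∑ u : Fin d → Bool, (1 / 2 ^ d : ℝ) * Wt p s * (1 / 2 ^ d : ℝ) * ind f x s u := by
      intro s
      rw [Finset.mul_sum]
      exact Finset.sum_congr rfl fun u _ => by ring
    refine Finset.sum_le_sum fun s _ => ?_
    rw [h2 s]
    refine Finset.sum_le_sum fun u _ => ?_
    have ht : 0 ≤ (1 / 2 ^ d : ℝ) * Wt p s * (1 / 2 ^ d : ℝ) * ind f x s u := by
      have := Wt_nonneg (le_of_lt hp0) (le_of_lt hp1) s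
      have := ind_nonneg f x s u
      positivity
    by_cases hx : x i = true <;> by_cases hs : s i = false
    · rw [if_neg (by simp [hx]), if_pos ⟨hx, hs⟩]; linarith
    · rw [if_neg (by simp [hx]), if_neg (by tauto)]; linarith
    · rw [if_pos ⟨by simpa using hx, hs⟩, if_neg (by tauto)]; linarith
    · rw [if_neg (by tauto), if_neg (by tauto)]; linarith
  have expand : (noiseSens p (restrictCoord f i false)
        + noiseSens p (restrictCoord f i true)) * (1 - p)
      = (1 - p) * noiseSens p (restrictCoord f i false)
        + (1 - p) * noiseSens p (restrictCoord f i true) := by ring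
  rw [expand, k0, k1]
  have split3 : ∑ x : Fin d → Bool, ∑ s : Fin d → Bool, ∑ u : Fin d → Bool,
        ((if x i = false ∧ s i = false then
            (1 / 2 ^ d : ℝ) * Wt p s * (1 / 2 ^ d : ℝ) * ind f x s u else 0)
          + (if x i = true ∧ s i = false then
            (1 / 2 ^ d : ℝ) * Wt p s * (1 / 2 ^ d : ℝ) * ind f x s u else 0))
      = (∑ x : Fin d → Bool, ∑ s : Fin d → Bool, ∑ u : Fin d → Bool,
          (if x i = false ∧ s i = false then
            (1 / 2 ^ d : ℝ) * Wt p s * (1 / 2 ^ d : ℝ) * ind f x s u else 0))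
        + ∑ x : Fin d → Bool, ∑ s : Fin d → Bool, ∑ u : Fin d → Bool,
          (if x i = true ∧ s i = false then
            (1 / 2 ^ d : ℝ) * Wt p s * (1 / 2 ^ d : ℝ) * ind f x s u else 0) := by
    rw [← Finset.sum_add_distrib]
    refine Finset.sum_congr rfl fun x _ => ?_
    rw [← Finset.sum_add_distrib]
    refine Finset.sum_congr rfl fun s _ => ?_
    rw [← Finset.sum_add_distrib]
  rw [split3] at hsum
  linarith
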